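/- arXiv:2309.09491 — 9 statements merged into one kernel-verified Lean document; each statement's English description precedes it below -/
import Mathlib

section
/- Let p be an odd prime. Then (2^(p-1) - 1)/p ≡ (1/2) · ∑_{j=0}^{p-2} 1/binomial(p-2, j) (mod p). -/
/-!
Since `(k + 1) * C(p - 1, k) = p * C(p, k + 1)`, summing over `k < p - 1` turns the left side into
`(1 / 2) * ∑ C(p - 1, k) / (k + 1)` exactly. Modulo `p` one has `C(p - 1, k) ≡ (-1) ^ k` and
`C(p - 2, k) ≡ (-1) ^ k (k + 1)`, so each summand `C(p - 1, k) / (k + 1)` is congruent to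
`1 / C(p - 2, k)`; congruence of rationals is `p`-adic closeness, which the ultrametric
inequality carries through the sum.
-/

/-- Rational congruence: `x ≡ y (mod m)` means that `x - y`, written in lowest
terms, has numerator divisible by `m`. -/
def ratModEq (m : ℕ) (x y : ℚ) : Prop := (m : ℤ) ∣ (x - y).num

open Finset

theorem sum_range_choose_div_succ (n : ℕ) :
    ∑ k ∈ range n, (n.choose k : ℚ) / (k + 1) = 2 * (2 ^ n - 1) / (n + 1) := by
  have hterm (k : ℕ) :
      (n.choose k : ℚ) / (k + 1) = ((n + 1).choose (k + 1) : ℚ) / (n + 1) := by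
    rw [div_eq_div_iff (by positivity) (by positivity)]
    exact_mod_cast (mul_comm _ _).trans (Nat.add_one_mul_choose_eq n k)
  have hsum : ∑ k ∈ range n, ((n + 1).choose (k + 1) : ℚ) = 2 ^ (n + 1) - 2 := by
    have h := Nat.sum_range_choose (n + 1)
    rw [sum_range_succ, sum_range_succ', Nat.choose_self, Nat.choose_zero_right] at h
    have h' : (∑ k ∈ range n, ((n + 1).choose (k + 1) : ℚ)) + 1 + 1 = 2 ^ (n + 1) := by
      exact_mod_cast h
    linear_combination h'
  rw [sum_congr rfl fun k _ => hterm k, ← sum_div, hsum]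
  ring

section CharP

variable {R : Type*} [CommRing R] {p : ℕ} [CharP R p]

theorem cast_choose_pred_prime (hp : p.Prime) {k : ℕ} (hk : k < p) :
    ((p - 1).choose k : R) = (-1) ^ k := by
  induction k with
  | zero => simp
  | succ k ih =>
    have hpascal := Nat.choose_succ_succ' (p - 1) k
    rw [Nat.sub_add_cancel hp.one_le] at hpascal
    have hzero : (p.choose (k + 1) : R) = 0 :=
      (CharP.cast_eq_zero_iff R p _).2 (hp.dvd_choose_self k.succ_ne_zero hk)
    rw [hpascal, Nat.cast_add, ih (by omega)] at hzero
    linear_combination hzero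

theorem cast_choose_sub_two_prime (hp : p.Prime) {k : ℕ} (hk : k < p - 1) :
    ((p - 2).choose k : R) = (-1) ^ k * (k + 1) := by
  have h := Nat.choose_mul_succ_eq (p - 2) k
  rw [show p - 2 + 1 = p - 1 by omega] at h
  have hcast : ∀ m ≤ p, ((p - m : ℕ) : R) = -m := fun m hm => by
    rw [Nat.cast_sub hm, CharP.cast_eq_zero, zero_sub]
  have h' := congrArg (Nat.cast : ℕ → R) h
  rw [Nat.cast_mul, Nat.cast_mul, hcast 1 (by omega), Nat.sub_sub, hcast (1 + k) (by omega),
    cast_choose_pred_prime hp (by omega)] at h'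
  push_cast at h'
  linear_combination -h'

theorem cast_choose_pred_mul_choose_sub_two (hp : p.Prime) {k : ℕ} (hk : k < p - 1) :
    ((p - 1).choose k * (p - 2).choose k : R) = k + 1 := by
  rw [cast_choose_pred_prime hp (by omega), cast_choose_sub_two_prime hp hk, ← mul_assoc,
    ← mul_pow, neg_one_mul, neg_neg, one_pow, one_mul]

end CharP

section padicNorm

variable {p : ℕ} [Fact p.Prime]

theorem ratModEq_of_padicNorm_sub_lt_one {x y : ℚ} (h : padicNorm p (x - y) < 1) :
    ratModEq p x y := by
  by_contra hnum
  have hden_pos : 0 < padicNorm p (x - y).den :=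
    lt_of_le_of_ne (padicNorm.nonneg _) (padicNorm.nonzero (by positivity)).symm
  have hnorm : padicNorm p (x - y) = 1 / padicNorm p (x - y).den := by
    conv_lhs => rw [← Rat.num_div_den (x - y)]
    rw [padicNorm.div, (padicNorm.int_eq_one_iff _).2 hnum]
  rw [hnorm, div_lt_iff₀ hden_pos, one_mul] at h
  exact h.not_ge (padicNorm.of_nat _)

theorem padicNorm_intCast_div_lt_one {a b : ℤ} (ha : (p : ℤ) ∣ a) (hb : ¬(p : ℤ) ∣ b) :
    padicNorm p (a / b) < 1 := by
  rw [padicNorm.div, (padicNorm.int_eq_one_iff b).2 hb, div_one]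
  exact (padicNorm.int_lt_one_iff a).2 ha

theorem padicNorm_choose_pred_div_sub_inv_choose_lt_one {k : ℕ} (hk : k < p - 1) :
    padicNorm p (((p - 1).choose k : ℚ) / (k + 1) - 1 / (p - 2).choose k) < 1 := by
  have hp : p.Prime := Fact.out
  have hprod := cast_choose_pred_mul_choose_sub_two (R := ZMod p) hp hk
  have hk1 : (k + 1 : ZMod p) ≠ 0 := by
    exact_mod_cast (ZMod.natCast_eq_zero_iff _ _).not.2
      (Nat.not_dvd_of_pos_of_lt k.succ_pos (by omega))
  have hC : ((p - 2).choose k : ℚ) ≠ 0 := Nat.cast_ne_zero.2 (Nat.choose_pos (by omega)).ne'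
  have hfrac : ((p - 1).choose k : ℚ) / (k + 1) - 1 / (p - 2).choose k =
      (((p - 1).choose k * (p - 2).choose k - (k + 1) : ℤ) : ℚ) /
        (((k + 1) * (p - 2).choose k : ℤ) : ℚ) := by
    push_cast
    field_simp
  rw [hfrac]
  apply padicNorm_intCast_div_lt_one
  · rw [← ZMod.intCast_zmod_eq_zero_iff_dvd]
    push_cast
    rw [hprod, sub_self]
  · rw [← ZMod.intCast_zmod_eq_zero_iff_dvd]
    push_cast
    exact mul_ne_zero hk1 (right_ne_zero_of_mul (hprod ▸ hk1))

end padicNorm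

theorem fermat_quotient_inverse_binomial_sum (p : ℕ) (hp : p.Prime) (hodd : Odd p) :
    ratModEq p ((2 ^ (p - 1) - 1 : ℚ) / p)
      ((1 / 2) * ∑ j ∈ Finset.range (p - 1), (1 : ℚ) / ((p - 2).choose j)) := by
  have : Fact p.Prime := ⟨hp⟩
  have hp2 : ¬p ∣ 2 := fun h => by
    rw [(Nat.prime_dvd_prime_iff_eq hp Nat.prime_two).1 h] at hodd
    exact absurd hodd (by decide)
  have hhalf : padicNorm p (1 / 2) = 1 := by
    have h2 := (padicNorm.nat_eq_one_iff 2).2 hp2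
    rw [Nat.cast_ofNat] at h2
    rw [padicNorm.div, padicNorm.one, h2, div_one]
  have hexact : (2 ^ (p - 1) - 1 : ℚ) / p =
      1 / 2 * ∑ k ∈ range (p - 1), ((p - 1).choose k : ℚ) / (k + 1) := by
    rw [sum_range_choose_div_succ, Nat.cast_pred hp.pos]
    field_simp
    ring
  apply ratModEq_of_padicNorm_sub_lt_one (p := p)
  rw [hexact, ← mul_sub, ← sum_sub_distrib, padicNorm.mul, hhalf, one_mul]
  exact padicNorm.sum_lt' (fun k hk =>
    padicNorm_choose_pred_div_sub_inv_choose_lt_one (mem_range.1 hk)) one_pos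
end

section
/- Let p be an odd prime and n ≥ 2 an integer. Then (n^p - n)/p ≡ -∑_{r=1}^{p-1} (-1)^r · (1^r + 2^r + ⋯ + (n-1)^r)/r (mod p). -/
/-!
The congruence `x ≡ y (mod p)` says `|x - y|_p < 1`, so it suffices to bound `p`-adic norms.
Telescoping `(k + 1)^p - k^p - 1` over `k < n` and expanding binomially gives
`n^p - n = ∑_{r=1}^{p-1} C(p, r) S_r` with `S_r = 1^r + ⋯ + (n-1)^r`. Since
`C(p, r)/p = C(p-1, r-1)/r` and `C(p-1, r-1) ≡ (-1)^(r-1) (mod p)`, each summand of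
`(n^p - n)/p` is congruent to `-(-1)^r S_r / r`, the denominator `r < p` being a `p`-adic unit.
-/

open Finset

theorem add_one_pow_sub_pow_sub_one {R : Type*} [CommRing R] (x : R) {p : ℕ} (hp : 1 ≤ p) :
    (x + 1) ^ p - x ^ p - 1 = ∑ r ∈ Icc 1 (p - 1), (p.choose r : R) * x ^ r := by
  rw [add_pow, range_eq_Ico, sum_eq_sum_Ico_succ_bot (by omega), sum_Ico_succ_top (by omega),
    ← Ico_add_one_right_eq_Icc, Nat.sub_add_cancel hp]
  simp only [mul_comm, pow_zero, one_pow, mul_one, Nat.choose_zero_right, Nat.choose_self,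
    Nat.cast_one]
  ring

theorem pow_sub_self_eq_sum_choose_mul_sum_pow {R : Type*} [CommRing R] (n : ℕ) {p : ℕ}
    (hp : 1 ≤ p) :
    (n : R) ^ p - n =
      ∑ r ∈ Icc 1 (p - 1), (p.choose r : R) * ∑ k ∈ Icc 1 (n - 1), (k : R) ^ r := by
  have htelescope :
      ∑ k ∈ range n, (((k : R) + 1) ^ p - (k : R) ^ p - 1) = (n : R) ^ p - n := by
    have := sum_range_sub (fun k : ℕ => (k : R) ^ p) n
    simp only [sum_sub_distrib, Nat.cast_succ] at this ⊢
    simp [this, zero_pow (by omega : p ≠ 0)]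
  have hsum_range : ∀ r ∈ Icc 1 (p - 1),
      ∑ k ∈ Icc 1 (n - 1), (k : R) ^ r = ∑ k ∈ range n, (k : R) ^ r := by
    intro r hr
    refine sum_subset (fun k hk => by simp at hk ⊢; omega) fun k hk hk' => ?_
    obtain rfl : k = 0 := by simp at hk hk'; omega
    simp only [mem_Icc] at hr
    simp [zero_pow (by omega : r ≠ 0)]
  rw [← htelescope, sum_congr rfl fun (k : ℕ) _ => add_one_pow_sub_pow_sub_one (k : R) hp,
    sum_comm]
  exact sum_congr rfl fun r hr => by rw [hsum_range r hr, mul_sum]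

theorem cast_choose_succ_succ_div {K : Type*} [Field K] [CharZero K] (n k : ℕ) :
    ((n + 1).choose (k + 1) : K) / (n + 1) = (n.choose k : K) / (k + 1) := by
  rw [div_eq_div_iff (by norm_cast) (by norm_cast)]
  exact_mod_cast (Nat.add_one_mul_choose_eq n k).symm.trans (mul_comm _ _)

theorem ZMod.natCast_choose_pred (p : ℕ) [hp : Fact p.Prime] {k : ℕ} (hk : k < p) :
    ((p - 1).choose k : ZMod p) = (-1) ^ k := by
  induction k with
  | zero => simp
  | succ k ih =>
    have hpascal : ((p - 1).choose k + (p - 1).choose (k + 1) : ZMod p) = 0 := by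
      rw_mod_cast [← Nat.choose_succ_succ', Nat.sub_add_cancel hp.out.one_le]
      exact (ZMod.natCast_eq_zero_iff _ _).mpr (hp.out.dvd_choose_self k.succ_ne_zero hk)
    rw [pow_succ, ← ih (by omega)]
    linear_combination hpascal

theorem padicNorm_choose_pred_sub_neg_one_pow_lt_one (p : ℕ) [Fact p.Prime] {k : ℕ}
    (hk : k < p) : padicNorm p ((p - 1).choose k - (-1) ^ k : ℚ) < 1 := by
  have h : ((((p - 1).choose k : ℤ) - (-1) ^ k : ℤ) : ZMod p) = 0 := by
    push_cast
    rw [ZMod.natCast_choose_pred p hk, sub_self]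
  exact_mod_cast (padicNorm.int_lt_one_iff _).mpr ((ZMod.intCast_zmod_eq_zero_iff_dvd _ p).mp h)

theorem padicNorm_lt_one_iff_dvd_num (p : ℕ) [hp : Fact p.Prime] (x : ℚ) :
    padicNorm p x < 1 ↔ (p : ℤ) ∣ x.num := by
  have hden : 0 < padicNorm p x.den := (padicNorm.nonneg _).lt_of_ne' fun h =>
    x.den_nz (by exact_mod_cast padicNorm.zero_of_padicNorm_eq_zero h)
  nth_rewrite 1 [← Rat.num_div_den x]
  rw [padicNorm.div, div_lt_one hden, ← padicNorm.int_lt_one_iff]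
  constructor
  · exact fun h => h.trans_le (padicNorm.of_nat _)
  · intro h
    have hcoprime : ¬ p ∣ x.den := fun hd => hp.out.not_dvd_one
      (x.reduced ▸ Nat.dvd_gcd (Int.natCast_dvd.mp ((padicNorm.int_lt_one_iff _).mp h)) hd)
    rwa [(padicNorm.nat_eq_one_iff _).mpr hcoprime]

theorem pow_sub_self_div_add_alternating_sum_eq (n : ℕ) {p : ℕ} (hp : 1 ≤ p) :
    ((n : ℚ) ^ p - n) / p +
        ∑ r ∈ Icc 1 (p - 1), (-1 : ℚ) ^ r * (∑ i ∈ Icc 1 (n - 1), (i : ℚ) ^ r) / r =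
      ∑ r ∈ Icc 1 (p - 1), ((p - 1).choose (r - 1) - (-1) ^ (r - 1) : ℚ) *
        (∑ i ∈ Icc 1 (n - 1), (i : ℚ) ^ r) / r := by
  rw [pow_sub_self_eq_sum_choose_mul_sum_pow n hp, sum_div, ← sum_add_distrib]
  refine sum_congr rfl fun r hr => ?_
  obtain ⟨k, rfl⟩ := Nat.exists_eq_add_one.mpr (mem_Icc.mp hr).1
  obtain ⟨q, rfl⟩ := Nat.exists_eq_add_one.mpr hp
  have hchoose := cast_choose_succ_succ_div (K := ℚ) q k
  simp only [Nat.add_sub_cancel]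
  push_cast at hchoose ⊢
  rw [mul_div_right_comm, hchoose]
  ring

theorem fermat_quotient_alternating_power_sum_general (p n : ℕ) (hp : p.Prime) :
    ratModEq p (((n : ℚ) ^ p - n) / p)
      (- ∑ r ∈ Finset.Icc 1 (p - 1),
          (-1 : ℚ) ^ r * (∑ i ∈ Finset.Icc 1 (n - 1), (i : ℚ) ^ r) / r) := by
  have := Fact.mk hp
  rw [ratModEq, ← padicNorm_lt_one_iff_dvd_num, sub_neg_eq_add,
    pow_sub_self_div_add_alternating_sum_eq n hp.one_le]
  refine padicNorm.sum_lt' (fun r hr => ?_) one_pos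
  rw [mem_Icc] at hr
  have hr_unit : ¬ p ∣ r := Nat.not_dvd_of_pos_of_lt (by omega) (by omega)
  rw [padicNorm.div, (padicNorm.nat_eq_one_iff _).mpr hr_unit, div_one, padicNorm.mul]
  refine mul_lt_one_of_nonneg_of_lt_one_left (padicNorm.nonneg _)
    (padicNorm_choose_pred_sub_neg_one_pow_lt_one p (by omega)) ?_
  exact_mod_cast padicNorm.of_nat (∑ i ∈ Icc 1 (n - 1), i ^ r)

theorem fermat_quotient_alternating_power_sum (p n : ℕ) (hp : p.Prime) (hodd : Odd p)
    (hn : 2 ≤ n) :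
    ratModEq p (((n : ℚ) ^ p - n) / p)
      (- ∑ r ∈ Finset.Icc 1 (p - 1),
          (-1 : ℚ) ^ r * (∑ i ∈ Finset.Icc 1 (n - 1), (i : ℚ) ^ r) / r) :=
  fermat_quotient_alternating_power_sum_general p n hp
end

section
/- Let p be an odd prime. Then (2^(p-1) - 1)/p ≡ -(1/2) · ∑_{j=1}^{p-1} 2^j/j (mod p). -/
open Finset

theorem dvd_num_of_padicNorm_lt_one {p : ℕ} [Fact p.Prime] {q : ℚ} (h : padicNorm p q < 1) :
    (p : ℤ) ∣ q.num := by
  rw [← padicNorm.int_lt_one_iff]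
  calc padicNorm p q.num = padicNorm p q * padicNorm p q.den := by
        rw [← padicNorm.mul, Rat.mul_den_eq_num]
    _ ≤ padicNorm p q := mul_le_of_le_one_right (padicNorm.nonneg _) (padicNorm.of_nat _)
    _ < 1 := h

theorem padicNorm_intCast_div_natCast_lt_one {p : ℕ} [Fact p.Prime] {a : ℤ} {b : ℕ}
    (ha : (p : ℤ) ∣ a) (hb : ¬ p ∣ b) : padicNorm p (a / b) < 1 := by
  rw [padicNorm.div, (padicNorm.nat_eq_one_iff _).mpr hb, div_one, padicNorm.int_lt_one_iff]
  exact ha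

theorem sum_range_succ_eq_add_sum_Icc_add {M : Type*} [AddCommMonoid M] (f : ℕ → M) {n : ℕ}
    (hn : 0 < n) : ∑ k ∈ range (n + 1), f k = f 0 + ∑ k ∈ Icc 1 (n - 1), f k + f n := by
  rw [sum_range_succ, range_eq_Ico, sum_eq_sum_Ico_succ_bot hn,
    Icc_sub_one_right_eq_Ico_of_not_isMin (by simpa using hn.ne')]

theorem two_pow_sub_two_eq_sum_choose {R : Type*} [CommRing R] {n : ℕ} (hn : Odd n) :
    (2 : R) ^ n - 2 = ∑ j ∈ Icc 1 (n - 1), (n.choose j : R) * (-2) ^ j := by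
  have h := add_pow (-2 : R) 1 n
  rw [sum_range_succ_eq_add_sum_Icc_add _ hn.pos] at h
  simp only [one_pow, mul_one, pow_zero, Nat.choose_zero_right, Nat.choose_self, Nat.cast_one,
    hn.neg_pow] at h
  norm_num [hn.neg_one_pow] at h
  rw [sum_congr rfl fun j _ => mul_comm _ _]
  linear_combination h

theorem cast_choose_div_eq_choose_pred_div {K : Type*} [Field K] [CharZero K] {n k : ℕ}
    (hn : 0 < n) (hk : 0 < k) :
    (n.choose k : K) / n = (n - 1).choose (k - 1) / k := by
  obtain ⟨n, rfl⟩ := Nat.exists_eq_add_of_lt hn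
  obtain ⟨k, rfl⟩ := Nat.exists_eq_add_of_lt hk
  have h := Nat.add_one_mul_choose_eq n k
  simp only [zero_add, Nat.add_sub_cancel]
  rw [div_eq_div_iff (by exact_mod_cast n.succ_ne_zero) (by exact_mod_cast k.succ_ne_zero)]
  exact_mod_cast (by linarith [h] : (n + 1).choose (k + 1) * (k + 1) = n.choose k * (n + 1))

theorem ZMod.cast_choose_pred_eq_neg_one_pow {p : ℕ} [hp : Fact p.Prime] {k : ℕ} (hk : k < p) :
    ((p - 1).choose k : ZMod p) = (-1) ^ k := by
  induction k with
  | zero => simp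
  | succ k ih =>
    have hpascal : p.choose (k + 1) = (p - 1).choose k + (p - 1).choose (k + 1) := by
      rw [← Nat.choose_succ_succ', Nat.sub_add_cancel hp.out.one_lt.le]
    have hzero : (p.choose (k + 1) : ZMod p) = 0 :=
      (ZMod.natCast_eq_zero_iff _ _).mpr (hp.out.dvd_choose_self k.succ_ne_zero hk)
    rw [hpascal, Nat.cast_add, ih (by omega)] at hzero
    rw [pow_succ]
    linear_combination hzero

theorem prime_dvd_choose_pred_mul_neg_pow_add_pow {p : ℕ} [Fact p.Prime] (x : ℤ) {j : ℕ}
    (hj : 0 < j) (hjp : j ≤ p) : (p : ℤ) ∣ (p - 1).choose (j - 1) * (-x) ^ j + x ^ j := by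
  rw [← ZMod.intCast_zmod_eq_zero_iff_dvd]
  push_cast
  rw [ZMod.cast_choose_pred_eq_neg_one_pow (by omega), neg_pow (x : ZMod p), ← mul_assoc,
    ← pow_add, (show Odd (j - 1 + j) by rw [Nat.odd_iff]; omega).neg_one_pow]
  ring

theorem two_pow_pred_sub_one_div_eq_sum {n : ℕ} (hn : Odd n) :
    ((2 : ℚ) ^ (n - 1) - 1) / n =
      1 / 2 * ∑ j ∈ Icc 1 (n - 1), ((n - 1).choose (j - 1) : ℚ) * (-2) ^ j / j := by
  have hn0 : (n : ℚ) ≠ 0 := by exact_mod_cast hn.pos.ne'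
  calc ((2 : ℚ) ^ (n - 1) - 1) / n = 1 / 2 * (((2 : ℚ) ^ n - 2) / n) := by
        rw [← pow_sub_one_mul hn.pos.ne' (2 : ℚ)]; field_simp
    _ = _ := by
        rw [two_pow_sub_two_eq_sum_choose hn, sum_div]
        congr 1
        refine sum_congr rfl fun j hj => ?_
        rw [mem_Icc] at hj
        rw [mul_div_right_comm, cast_choose_div_eq_choose_pred_div hn.pos (by omega)]
        ring

theorem fermat_quotient_two_power_sum (p : ℕ) (hp : p.Prime) (hodd : Odd p) :
    ratModEq p ((2 ^ (p - 1) - 1 : ℚ) / p)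
      (-(1 / 2) * ∑ j ∈ Finset.Icc 1 (p - 1), (2 : ℚ) ^ j / j) := by
  have := Fact.mk hp
  have hdiff : ((2 ^ (p - 1) - 1 : ℚ) / p) - -(1 / 2) * ∑ j ∈ Icc 1 (p - 1), (2 : ℚ) ^ j / j =
      ∑ j ∈ Icc 1 (p - 1), (((p - 1).choose (j - 1) * (-2) ^ j + 2 ^ j : ℤ) : ℚ) / (2 * j : ℕ) := by
    rw [two_pow_pred_sub_one_div_eq_sum hodd, mul_sum, mul_sum, ← sum_sub_distrib]
    refine sum_congr rfl fun j _ => ?_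
    push_cast
    ring
  have hne : (Icc 1 (p - 1)).Nonempty := nonempty_Icc.mpr (Nat.le_sub_one_of_lt hp.one_lt)
  refine dvd_num_of_padicNorm_lt_one (hdiff ▸ padicNorm.sum_lt hne fun j hj => ?_)
  rw [mem_Icc] at hj
  refine padicNorm_intCast_div_natCast_lt_one
    (prime_dvd_choose_pred_mul_neg_pow_add_pow 2 (j := j) (by omega) (by omega)) fun h => ?_
  exact Nat.not_dvd_of_pos_of_lt (by omega) (by omega)
    ((Nat.coprime_two_right.mpr hodd).dvd_of_dvd_mul_left h)
end

section
/- Let p be an odd prime. Then (2^(p-1) - 1)/p ≡ -(1/2) · ∑_{j=1}^{p-1} (-1)^j/j (mod p). -/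
/-!
Since `k * C(p, k) = p * C(p - 1, k - 1)`, the binomial theorem gives the exact identity
`2 (2^(p-1) - 1) / p = ∑_{k=1}^{p-1} C(p - 1, k - 1) / k`, and `C(p - 1, k - 1) ≡ (-1)^(k-1) (mod p)`.
So twice the difference of the two sides is a sum of fractions with numerators divisible by `p`
and denominators `k < p`, which is small in the `p`-adic norm.
-/

open Finset

theorem ratModEq_iff_padicNorm_sub_lt_one {p : ℕ} [Fact p.Prime] {x y : ℚ} :
    ratModEq p x y ↔ padicNorm p (x - y) < 1 := by
  unfold ratModEq
  set r := x - y
  rw [← Rat.num_div_den r, padicNorm.div, Rat.num_div_den]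
  constructor
  · intro h
    have hden : ¬ p ∣ r.den := fun hd => (Fact.out : p.Prime).one_lt.ne'
      (Nat.eq_one_of_dvd_coprimes r.reduced (Int.natCast_dvd.mp h) hd)
    rw [(padicNorm.nat_eq_one_iff r.den).mpr hden, div_one]
    exact (padicNorm.int_lt_one_iff _).mpr h
  · intro h
    by_contra hnum
    have hden_pos : 0 < padicNorm p r.den := (padicNorm.nonneg _).lt_of_ne fun h =>
      r.den_ne_zero (by exact_mod_cast padicNorm.zero_of_padicNorm_eq_zero h.symm)
    rw [(padicNorm.int_eq_one_iff _).mpr hnum, div_lt_one hden_pos] at h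
    exact (padicNorm.of_nat r.den).not_gt h

theorem Nat.Prime.choose_pred_modEq_neg_one_pow {p j : ℕ} (hp : p.Prime) (hj : j < p) :
    ((p - 1).choose j : ℤ) ≡ (-1) ^ j [ZMOD p] := by
  induction j with
  | zero => simp [Int.ModEq.refl]
  | succ j ih =>
    have hpascal : ((p - 1).choose (j + 1) : ℤ) = p.choose (j + 1) - (p - 1).choose j := by
      conv_rhs => rw [← Nat.sub_add_cancel hp.one_le, Nat.choose_succ_succ]
      push_cast; ring
    have hdvd : (p : ℤ) ∣ p.choose (j + 1) :=
      Int.natCast_dvd_natCast.mpr (hp.dvd_choose_self j.succ_ne_zero hj)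
    rw [hpascal, pow_succ, mul_neg_one, ← zero_sub]
    exact (Int.modEq_zero_iff_dvd.mpr hdvd).sub (ih (by omega))

theorem sum_range_succ_choose_div_add_one (n : ℕ) :
    ∑ i ∈ range (n + 1), (n.choose i : ℚ) / (i + 1) = (2 ^ (n + 1) - 1) / (n + 1) := by
  have hterm (i : ℕ) : (n.choose i : ℚ) / (i + 1) = ((n + 1).choose (i + 1) : ℚ) / (n + 1) := by
    rw [div_eq_div_iff (by positivity) (by positivity), mul_comm]
    exact_mod_cast Nat.add_one_mul_choose_eq n i
  have hsum : ∑ i ∈ range (n + 1), ((n + 1).choose (i + 1) : ℚ) = 2 ^ (n + 1) - 1 := by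
    have h := Nat.sum_range_choose (n + 1)
    rw [sum_range_succ'] at h
    rw [eq_sub_iff_add_eq]
    exact_mod_cast h
  simp_rw [hterm, ← sum_div, hsum]

theorem sum_range_choose_div_add_one (n : ℕ) :
    ∑ i ∈ range n, (n.choose i : ℚ) / (i + 1) = 2 * (2 ^ n - 1) / (n + 1) := by
  have h := sum_range_succ_choose_div_add_one n
  rw [sum_range_succ, Nat.choose_self, Nat.cast_one] at h
  rw [eq_sub_of_add_eq h]
  field_simp
  ring

theorem fermat_quotient_two_sub_alternating_harmonic_eq {p : ℕ} (hp : 0 < p) :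
    (2 ^ (p - 1) - 1 : ℚ) / p - -(1 / 2) * ∑ j ∈ Icc 1 (p - 1), (-1 : ℚ) ^ j / j
      = 1 / 2 * ∑ i ∈ range (p - 1), (((p - 1).choose i - (-1) ^ i : ℤ) : ℚ) / (i + 1) := by
  have hquot : (2 ^ (p - 1) - 1 : ℚ) / p
      = 1 / 2 * ∑ i ∈ range (p - 1), ((p - 1).choose i : ℚ) / (i + 1) := by
    rw [sum_range_choose_div_add_one, Nat.cast_pred hp, sub_add_cancel]
    ring
  have hreindex : ∑ j ∈ Icc 1 (p - 1), (-1 : ℚ) ^ j / j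
      = ∑ i ∈ range (p - 1), -(-1 : ℚ) ^ i / (i + 1) := by
    rw [← Ico_add_one_right_eq_Icc, sum_Ico_eq_sum_range, Nat.add_sub_cancel]
    refine sum_congr rfl fun i _ => ?_
    push_cast
    ring
  rw [hquot, hreindex]
  push_cast
  simp only [sub_div, neg_div, sum_sub_distrib, sum_neg_distrib]
  ring

theorem padicNorm_sum_range_div_add_one_lt_one {p : ℕ} [Fact p.Prime] (a : ℕ → ℤ)
    (ha : ∀ i < p - 1, (p : ℤ) ∣ a i) :
    padicNorm p (∑ i ∈ range (p - 1), (a i : ℚ) / (i + 1)) < 1 := by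
  refine padicNorm.sum_lt' (fun i hi => ?_) one_pos
  have hi : i < p - 1 := mem_range.mp hi
  have hunit : padicNorm p ((i + 1 : ℕ) : ℚ) = 1 :=
    (padicNorm.nat_eq_one_iff _).mpr (Nat.not_dvd_of_pos_of_lt i.succ_pos (by omega))
  rw [padicNorm.div, ← Nat.cast_succ, hunit, div_one, padicNorm.int_lt_one_iff]
  exact ha i hi

theorem fermat_quotient_alternating_harmonic (p : ℕ) (hp : p.Prime) (hodd : Odd p) :
    ratModEq p ((2 ^ (p - 1) - 1 : ℚ) / p)
      (-(1 / 2) * ∑ j ∈ Finset.Icc 1 (p - 1), (-1 : ℚ) ^ j / j) := by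
  have := Fact.mk hp
  have hhalf : padicNorm p (1 / 2) = 1 := by
    have hp2 : p ≠ 2 := by rintro rfl; norm_num at hodd
    rw [padicNorm.div, padicNorm.one, ← Nat.cast_two,
      padicNorm.padicNorm_of_prime_of_ne hp2, div_one]
  rw [ratModEq_iff_padicNorm_sub_lt_one, fermat_quotient_two_sub_alternating_harmonic_eq hp.pos,
    padicNorm.mul, hhalf, one_mul]
  exact padicNorm_sum_range_div_add_one_lt_one _ fun i hi =>
    (hp.choose_pred_modEq_neg_one_pow (by omega)).symm.dvd
end

section
/- For any odd positive integer n, the polynomial identity ∑_{r=1}^{n} (-1)^(r-1) x^r / r = ∑_{r=1}^{n} binomial(n, r) · (-1)^(r-1) (x+1)^r / r + ∑_{r=1}^{n} (-1)^r binomial(n, r) / r holds (as an identity of polynomials over the rationals, equivalently for all rational x). -/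
/-!
Write `y = x + 1`. Going from `n` to `n + 1`, the left side gains `(-1)^n x^(n+1)/(n+1)`; on the
right side, Pascal's rule in the form `C(n+1,r)/r = C(n,r)/r + C(n+1,r)/(n+1)` splits off
`(n+1)⁻¹ ∑ C(n+1,r) (-1)^(r-1) (y^r - 1)`, which the binomial theorem evaluates to
`-(1-y)^(n+1)/(n+1) = (-1)^n x^(n+1)/(n+1)`. Induction on `n` concludes.
-/

open Finset

lemma neg_one_pow_sub_one_eq_neg {R : Type*} [Ring R] {r : ℕ} (hr : 1 ≤ r) :
    (-1 : R) ^ (r - 1) = -(-1) ^ r := by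
  obtain ⟨k, rfl⟩ := Nat.exists_eq_add_of_le' hr
  simp [pow_succ]

theorem sum_Icc_one_choose_mul_pow {R : Type*} [CommRing R] (m : ℕ) (y : R) :
    ∑ r ∈ Icc 1 m, (m.choose r : R) * y ^ r = (1 + y) ^ m - 1 := by
  rw [add_comm, add_pow, range_eq_Ico, sum_eq_sum_Ico_succ_bot (by omega : 0 < m + 1),
    zero_add, Ico_add_one_right_eq_Icc]
  simp [mul_comm]

theorem sum_Icc_one_choose_mul_neg_one_pow_mul_pow_sub_one {R : Type*} [CommRing R] (m : ℕ)
    (y : R) :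
    ∑ r ∈ Icc 1 m, (m.choose r : R) * (-1) ^ (r - 1) * (y ^ r - 1) = 0 ^ m - (1 - y) ^ m := by
  have hterm : ∀ r ∈ Icc 1 m, (m.choose r : R) * (-1) ^ (r - 1) * (y ^ r - 1) =
      (m.choose r : R) * (-1) ^ r - (m.choose r : R) * (-y) ^ r := by
    intro r hr
    rw [neg_one_pow_sub_one_eq_neg (mem_Icc.1 hr).1, neg_pow]
    ring
  rw [sum_congr rfl hterm, sum_sub_distrib, sum_Icc_one_choose_mul_pow,
    sum_Icc_one_choose_mul_pow, add_neg_cancel, ← sub_eq_add_neg]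
  ring

theorem Nat.choose_succ_div_eq {K : Type*} [Field K] [CharZero K] (n : ℕ) {r : ℕ}
    (hr : 1 ≤ r) :
    ((n + 1).choose r : K) / r = (n.choose r : K) / r + ((n + 1).choose r : K) / (n + 1) := by
  obtain ⟨k, rfl⟩ := Nat.exists_eq_add_of_le' hr
  have hpascal : ((n + 1).choose (k + 1) : K) = n.choose k + n.choose (k + 1) := by
    exact_mod_cast Nat.choose_succ_succ n k
  have habsorb : ((n : K) + 1) * n.choose k = (n + 1).choose (k + 1) * ((k : K) + 1) := by
    exact_mod_cast Nat.add_one_mul_choose_eq n k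
  push_cast
  field_simp
  linear_combination ((n : K) + 1) * hpascal + habsorb

section LogSeries

variable {K : Type*} [Field K]

def truncatedLogSeries (n : ℕ) (x : K) : K :=
  ∑ r ∈ Icc 1 n, (-1) ^ (r - 1) * x ^ r / r

def binomialLogSum (n : ℕ) (y : K) : K :=
  ∑ r ∈ Icc 1 n, (n.choose r : K) * (-1) ^ (r - 1) * (y ^ r - 1) / r

theorem truncatedLogSeries_succ (n : ℕ) (x : K) :
    truncatedLogSeries (n + 1) x = truncatedLogSeries n x + (-1) ^ n * x ^ (n + 1) / (n + 1) := by
  simp [truncatedLogSeries, sum_Icc_succ_top]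

theorem binomialLogSum_succ [CharZero K] (n : ℕ) (y : K) :
    binomialLogSum (n + 1) y = binomialLogSum n y - (1 - y) ^ (n + 1) / (n + 1) := by
  have hsplit : ∀ r ∈ Icc 1 (n + 1),
      ((n + 1).choose r : K) * (-1) ^ (r - 1) * (y ^ r - 1) / r =
        (n.choose r : K) * (-1) ^ (r - 1) * (y ^ r - 1) / r +
          ((n + 1).choose r : K) * (-1) ^ (r - 1) * (y ^ r - 1) / (n + 1) := by
    intro r hr
    linear_combination ((-1 : K) ^ (r - 1) * (y ^ r - 1)) *
      Nat.choose_succ_div_eq (K := K) n (mem_Icc.1 hr).1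
  rw [binomialLogSum, sum_congr rfl hsplit, sum_add_distrib, ← sum_div,
    sum_Icc_one_choose_mul_neg_one_pow_mul_pow_sub_one, sum_Icc_succ_top (by omega),
    Nat.choose_succ_self, zero_pow n.succ_ne_zero, Nat.cast_zero, zero_mul, zero_mul, zero_div,
    add_zero, zero_sub, neg_div, ← sub_eq_add_neg, binomialLogSum]

theorem truncatedLogSeries_eq_binomialLogSum [CharZero K] (n : ℕ) (x : K) :
    truncatedLogSeries n x = binomialLogSum n (x + 1) := by
  induction n with
  | zero => simp [truncatedLogSeries, binomialLogSum]
  | succ n ih =>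
    rw [truncatedLogSeries_succ, binomialLogSum_succ, ih, sub_add_cancel_right, neg_pow x]
    ring

end LogSeries

theorem odd_polynomial_identity_general (n : ℕ) (x : ℚ) :
    ∑ r ∈ Finset.Icc 1 n, (-1 : ℚ) ^ (r - 1) * x ^ r / r =
      (∑ r ∈ Finset.Icc 1 n, (n.choose r : ℚ) * (-1) ^ (r - 1) * (x + 1) ^ r / r) +
        ∑ r ∈ Finset.Icc 1 n, (-1 : ℚ) ^ r * (n.choose r) / r := by
  rw [← sum_add_distrib]
  refine (truncatedLogSeries_eq_binomialLogSum n x).trans (sum_congr rfl fun r hr => ?_)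
  rw [neg_one_pow_sub_one_eq_neg (mem_Icc.1 hr).1]
  ring

theorem odd_polynomial_identity (n : ℕ) (hn : 0 < n) (hodd : Odd n) (x : ℚ) :
    ∑ r ∈ Finset.Icc 1 n, (-1 : ℚ) ^ (r - 1) * x ^ r / r =
      (∑ r ∈ Finset.Icc 1 n, (n.choose r : ℚ) * (-1) ^ (r - 1) * (x + 1) ^ r / r) +
        ∑ r ∈ Finset.Icc 1 n, (-1 : ℚ) ^ r * (n.choose r) / r :=
  odd_polynomial_identity_general n x
end

section
/- For every positive integer n, the polynomial identity ∑_{k=1}^{n} (1-x)^k / k = ∑_{k=1}^{n} binomial(n, k) · (-1)^k (x^k - 1)/k holds (as an identity of polynomials over the rationals, equivalently for all rational x). -/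
/-!
Induction on `n`. Pascal's rule and the absorption identity `(n + 1) C(n, k - 1) = k C(n + 1, k)`
give `C(n + 1, k) / k = C(n, k) / k + C(n + 1, k) / (n + 1)`, so passing from `n` to `n + 1` adds
`(n + 1)⁻¹ ∑_{k ≥ 1} C(n + 1, k) (-1)^k (x^k - 1)` to the right-hand side. By the binomial theorem
this is `(1 - x)^(n + 1) / (n + 1)`, the term added to the left-hand side.
-/

open Finset

section CommRing

variable {R : Type*} [CommRing R]

theorem sum_range_choose_mul_neg_one_pow_mul_pow (n : ℕ) (x : R) :
    ∑ k ∈ range (n + 1), (n.choose k : R) * (-1) ^ k * x ^ k = (1 - x) ^ n := by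
  rw [sub_eq_neg_add, add_pow]
  refine sum_congr rfl fun k _ => ?_
  ring

theorem sum_Icc_choose_mul_neg_one_pow_mul_pow_sub_one (n : ℕ) (x : R) :
    ∑ k ∈ Icc 1 n, (n.choose k : R) * (-1) ^ k * (x ^ k - 1) = (1 - x) ^ n - 0 ^ n := by
  have hrange : ∑ k ∈ range (n + 1), (n.choose k : R) * (-1) ^ k * (x ^ k - 1)
      = (1 - x) ^ n - (1 - 1) ^ n := by
    simp only [mul_sub, mul_one, sum_sub_distrib, sum_range_choose_mul_neg_one_pow_mul_pow]
    rw [← sum_range_choose_mul_neg_one_pow_mul_pow n 1]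
    simp
  rw [sub_self] at hrange
  rw [← hrange, Nat.range_succ_eq_Icc_zero, Icc_eq_cons_Ioc n.zero_le, sum_cons,
    ← Icc_add_one_left_eq_Ioc]
  simp

end CommRing

section Field

variable {K : Type*} [Field K] [CharZero K]

theorem Nat.cast_choose_succ_div_eq (n : ℕ) {k : ℕ} (hk : k ≠ 0) :
    ((n + 1).choose k : K) / k = (n.choose k : K) / k + ((n + 1).choose k : K) / (n + 1) := by
  obtain ⟨j, rfl⟩ : ∃ j, k = j + 1 := ⟨k - 1, by omega⟩
  have hpascal : ((n + 1).choose (j + 1) : K) = n.choose j + n.choose (j + 1) := by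
    exact_mod_cast Nat.choose_succ_succ' n j
  have habsorb : ((n + 1 : ℕ) * n.choose j : K) = (n + 1).choose (j + 1) * (j + 1 : ℕ) := by
    exact_mod_cast Nat.add_one_mul_choose_eq n j
  push_cast at habsorb ⊢
  field_simp
  linear_combination (n + 1 : K) * hpascal + habsorb

theorem sum_Icc_choose_succ_mul_neg_one_pow_mul_pow_sub_one_div (n : ℕ) (x : K) :
    ∑ k ∈ Icc 1 (n + 1), ((n + 1).choose k : K) * (-1) ^ k * (x ^ k - 1) / k =
      ∑ k ∈ Icc 1 n, (n.choose k : K) * (-1) ^ k * (x ^ k - 1) / k +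
        (1 - x) ^ (n + 1) / (n + 1) := by
  have hsplit : ∀ k ∈ Icc 1 (n + 1), ((n + 1).choose k : K) * (-1) ^ k * (x ^ k - 1) / k =
      (n.choose k : K) * (-1) ^ k * (x ^ k - 1) / k +
        ((n + 1).choose k : K) * (-1) ^ k * (x ^ k - 1) / (n + 1) := by
    intro k hk
    have hk0 : k ≠ 0 := Nat.one_le_iff_ne_zero.mp (mem_Icc.mp hk).1
    rw [mul_assoc, mul_div_right_comm, Nat.cast_choose_succ_div_eq n hk0]
    ring
  have hbinom := sum_Icc_choose_mul_neg_one_pow_mul_pow_sub_one (n + 1) x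
  rw [zero_pow n.succ_ne_zero, sub_zero] at hbinom
  rw [sum_congr rfl hsplit, sum_add_distrib, ← sum_div, sum_Icc_succ_top (by omega)]
  push_cast
  simp [hbinom]

end Field

theorem one_sub_x_power_identity_general (n : ℕ) (x : ℚ) :
    ∑ k ∈ Finset.Icc 1 n, (1 - x) ^ k / k =
      ∑ k ∈ Finset.Icc 1 n, (n.choose k : ℚ) * (-1) ^ k * (x ^ k - 1) / k := by
  induction n with
  | zero => simp
  | succ n ih =>
    rw [sum_Icc_succ_top (by omega), ih, sum_Icc_choose_succ_mul_neg_one_pow_mul_pow_sub_one_div]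
    push_cast
    ring

theorem one_sub_x_power_identity (n : ℕ) (hn : 0 < n) (x : ℚ) :
    ∑ k ∈ Finset.Icc 1 n, (1 - x) ^ k / k =
      ∑ k ∈ Finset.Icc 1 n, (n.choose k : ℚ) * (-1) ^ k * (x ^ k - 1) / k :=
  one_sub_x_power_identity_general n x
end

section
/- Let r and n be positive integers and let q be a rational number. Then ∑_{k=0}^{n} H_k^{(r)} · binomial(n, k) · (1-q)^k · q^(n-k) = H_n^{(r)} − ∑_{j=1}^{n} ( ∑_{l=0}^{j-1} (-1)^(j-l-1) · binomial(n-l-1, n-j) · binomial(n, l) · 1/(n-l)^(r-1) ) · q^j / j. -/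
/-!
With `b k = (n.choose k) (1 - q)^k q^(n - k)`, a probability distribution in `k`, summation by
parts gives `∑ H_k^{(r)} b k = H_n^{(r)} - ∑_{i=1}^n i^{-r} ∑_{k<i} b k`. The lower tail
`∑_{k<i} b k` is an incomplete beta function of `q`: it vanishes at `q = 0` and its derivative
telescopes to `i (n.choose i) q^(n-i) (1 - q)^(i-1)`, so integrating term by term gives
`i (n.choose i) ∑_{s<i} (-1)^s ((i-1).choose s) q^(n-i+1+s) / (n-i+1+s)`. The substitution
`l = n - i`, `j = n - i + 1 + s` turns this into the stated double sum.
-/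

/-- `harmonic' r k` is the `k`-th harmonic number of order `r`, i.e. `∑_{i=1}^k 1/i^r`. -/
def harmonic' (r k : ℕ) : ℚ := ∑ i ∈ Finset.Icc 1 k, 1 / (i : ℚ) ^ r

open Finset Polynomial

theorem Finset.sum_range_succ_sum_Icc_mul {R : Type*} [NonUnitalNonAssocSemiring R]
    (f a : ℕ → R) (n : ℕ) :
    ∑ k ∈ range (n + 1), (∑ i ∈ Icc 1 k, f i) * a k =
      ∑ i ∈ Icc 1 n, f i * ∑ k ∈ Icc i n, a k := by
  simp only [sum_mul, mul_sum]
  exact sum_comm' fun k i => by simp only [mem_range, mem_Icc]; omega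

theorem Finset.sum_Icc_sum_range_reflect {M : Type*} [AddCommMonoid M]
    (f : ℕ → ℕ → M) (n : ℕ) :
    ∑ j ∈ Icc 1 n, ∑ l ∈ range j, f j l =
      ∑ i ∈ Icc 1 n, ∑ s ∈ range i, f (n - i + 1 + s) (n - i) := by
  rw [sum_sigma', sum_sigma']
  refine sum_nbij' (fun x => ⟨n - x.2, x.1 - x.2 - 1⟩)
    (fun x => ⟨n - x.1 + 1 + x.2, n - x.1⟩) ?_ ?_ ?_ ?_ ?_
  all_goals
    rintro ⟨a, b⟩ h
    simp only [mem_sigma, mem_Icc, mem_range] at h ⊢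
    first
    | omega
    | congr 1 <;> omega

namespace Polynomial

theorem eq_of_derivative_eq_of_eval_zero_eq {R : Type*} [CommRing R] [IsAddTorsionFree R]
    {p q : R[X]} (hd : derivative p = derivative q) (h0 : p.eval 0 = q.eval 0) : p = q := by
  have hc := eq_C_of_derivative_eq_zero (p := p - q) (by rw [derivative_sub, hd, sub_self])
  rw [coeff_zero_eq_eval_zero, eval_sub, h0, sub_self, C_0] at hc
  exact sub_eq_zero.mp hc

theorem derivative_sum_range_choose_mul_one_sub_pow_mul_pow {R : Type*} [CommRing R]
    (n : ℕ) {i : ℕ} (hi : i ≤ n) :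
    derivative (∑ k ∈ range i, (n.choose k : R[X]) * (1 - X) ^ k * X ^ (n - k)) =
      ((i * n.choose i : ℕ) : R[X]) * (1 - X) ^ (i - 1) * X ^ (n - i) := by
  induction i with
  | zero => simp
  | succ i ih =>
    rw [sum_range_succ, derivative_add, ih (by omega)]
    have hsucc : (i + 1) * n.choose (i + 1) = n.choose i * (n - i) := by
      rw [mul_comm, Nat.choose_succ_right_eq]
    obtain ⟨d, hd⟩ : ∃ d, n - i = d + 1 := ⟨n - i - 1, by omega⟩
    rw [hsucc, show n - (i + 1) = d by omega, hd, Nat.add_sub_cancel]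
    simp only [derivative_mul, derivative_natCast, derivative_pow, derivative_sub,
      derivative_one, derivative_X, C_eq_natCast]
    push_cast
    ring

theorem derivative_sum_range_choose_mul_X_pow_div {K : Type*} [Field K] [CharZero K]
    (m N : ℕ) (hm : 0 < m) :
    derivative (∑ s ∈ range (N + 1), C ((-1) ^ s * N.choose s / (m + s : K)) * X ^ (m + s)) =
      X ^ (m - 1) * (1 - X) ^ N := by
  rw [sub_eq_neg_add, add_pow, mul_sum, derivative_sum]
  refine sum_congr rfl fun s _ => ?_
  have hms : (m + s : K) ≠ 0 := by norm_cast; omega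
  rw [derivative_C_mul_X_pow, Nat.cast_add, div_mul_cancel₀ _ hms,
    show m + s - 1 = m - 1 + s by omega]
  simp only [map_mul, map_pow, map_neg, map_one, map_natCast, one_pow, mul_one,
    neg_pow (X : K[X])]
  ring

theorem sum_range_choose_mul_one_sub_X_pow_mul_X_pow {K : Type*} [Field K] [CharZero K]
    (m N : ℕ) (hm : 0 < m) :
    ∑ k ∈ range (N + 1), ((m + N).choose k : K[X]) * (1 - X) ^ k * X ^ (m + N - k) =
      C (((N + 1) * (m + N).choose (N + 1) : ℕ) : K) *
        ∑ s ∈ range (N + 1), C ((-1) ^ s * N.choose s / (m + s : K)) * X ^ (m + s) := by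
  apply eq_of_derivative_eq_of_eval_zero_eq
  · rw [derivative_sum_range_choose_mul_one_sub_pow_mul_pow _ (by omega), derivative_C_mul,
      derivative_sum_range_choose_mul_X_pow_div _ _ hm, map_natCast,
      Nat.add_sub_cancel, show m + N - (N + 1) = m - 1 by omega]
    ring
  · simp only [eval_finsetSum, eval_mul, eval_pow, eval_X, eval_C]
    rw [sum_eq_zero fun k hk => by rw [zero_pow (by simp at hk; omega), mul_zero],
      sum_eq_zero fun s _ => by rw [zero_pow (by omega), mul_zero], mul_zero]

end Polynomial

theorem sum_range_choose_mul_one_sub_pow_mul_pow {K : Type*} [Field K] [CharZero K]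
    (m N : ℕ) (hm : 0 < m) (q : K) :
    ∑ k ∈ range (N + 1), ((m + N).choose k : K) * (1 - q) ^ k * q ^ (m + N - k) =
      ((N + 1) * (m + N).choose (N + 1) : ℕ) *
        ∑ s ∈ range (N + 1), (-1) ^ s * N.choose s * q ^ (m + s) / ((m + s : ℕ) : K) := by
  have h := congrArg (eval q) (sum_range_choose_mul_one_sub_X_pow_mul_X_pow (K := K) m N hm)
  simp only [eval_finsetSum, eval_mul, eval_pow, eval_X, eval_C, eval_sub, eval_one,
    eval_natCast] at h
  rw [h, Nat.cast_mul]
  congr 1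
  exact sum_congr rfl fun s _ => by push_cast; ring

theorem sum_range_choose_mul_one_sub_pow_mul_pow_eq_one {R : Type*} [CommRing R]
    (n : ℕ) (q : R) :
    ∑ k ∈ range (n + 1), (n.choose k : R) * (1 - q) ^ k * q ^ (n - k) = 1 := by
  have h := (add_pow (1 - q) q n).symm
  rw [sub_add_cancel, one_pow] at h
  exact (sum_congr rfl fun k _ => by ring).trans h

theorem sum_range_harmonic'_mul_eq_sub (r n : ℕ) (b : ℕ → ℚ)
    (hb : ∑ k ∈ range (n + 1), b k = 1) :
    ∑ k ∈ range (n + 1), harmonic' r k * b k =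
      harmonic' r n - ∑ i ∈ Icc 1 n, 1 / (i : ℚ) ^ r * ∑ k ∈ range i, b k := by
  unfold harmonic'
  rw [sum_range_succ_sum_Icc_mul, ← sum_sub_distrib]
  refine sum_congr rfl fun i hi => ?_
  rw [← Ico_add_one_right_eq_Icc, sum_Ico_eq_sub _ (by simp at hi; omega), hb]
  ring

theorem binomial_sum_higher_harmonic_general (r n : ℕ) (hr : 0 < r) (q : ℚ) :
    ∑ k ∈ Finset.range (n + 1),
        harmonic' r k * (n.choose k : ℚ) * (1 - q) ^ k * q ^ (n - k) =
      harmonic' r n -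
        ∑ j ∈ Finset.Icc 1 n,
          (∑ l ∈ Finset.range j,
              (-1 : ℚ) ^ (j - l - 1) * ((n - l - 1).choose (n - j) : ℚ) *
                (n.choose l : ℚ) * (1 / ((n - l : ℕ) : ℚ) ^ (r - 1))) *
            q ^ j / (j : ℚ) := by
  simp only [mul_assoc]
  rw [sum_range_harmonic'_mul_eq_sub r n _ (by simpa only [← mul_assoc] using
    sum_range_choose_mul_one_sub_pow_mul_pow_eq_one n q)]
  simp only [sum_mul, sum_div, ← mul_assoc]
  rw [sum_Icc_sum_range_reflect]
  congr 1
  refine sum_congr rfl fun i hi => ?_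
  rw [mem_Icc] at hi
  have hlower := sum_range_choose_mul_one_sub_pow_mul_pow (n - i + 1) (i - 1) (Nat.succ_pos _) q
  rw [show n - i + 1 + (i - 1) = n by omega, Nat.sub_add_cancel hi.1] at hlower
  rw [hlower, mul_sum, mul_sum]
  refine sum_congr rfl fun s hs => ?_
  rw [mem_range] at hs
  rw [show n - i + 1 + s - (n - i) - 1 = s by omega, show n - (n - i) - 1 = i - 1 by omega,
    show n - (n - i + 1 + s) = i - 1 - s by omega, show n - (n - i) = i by omega,
    Nat.choose_symm (by omega), Nat.choose_symm hi.2]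
  have hi0 : (i : ℚ) ≠ 0 := by norm_cast; omega
  obtain ⟨r, rfl⟩ : ∃ r', r = r' + 1 := ⟨r - 1, by omega⟩
  field_simp
  push_cast
  ring

theorem binomial_sum_higher_harmonic (r n : ℕ) (hr : 0 < r) (hn : 0 < n) (q : ℚ) :
    ∑ k ∈ Finset.range (n + 1),
        harmonic' r k * (n.choose k : ℚ) * (1 - q) ^ k * q ^ (n - k) =
      harmonic' r n -
        ∑ j ∈ Finset.Icc 1 n,
          (∑ l ∈ Finset.range j,
              (-1 : ℚ) ^ (j - l - 1) * ((n - l - 1).choose (n - j) : ℚ) *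
                (n.choose l : ℚ) * (1 / ((n - l : ℕ) : ℚ) ^ (r - 1))) *
            q ^ j / (j : ℚ) :=
  binomial_sum_higher_harmonic_general r n hr q
end

section
/- Let n and j be positive integers with 1 ≤ j ≤ n. Then ∑_{l=0}^{j-1} (-1)^(j-l-1) · binomial(n-l-1, n-j) · binomial(n, l) = 1. -/
/-!
Writing `m = n - j` and `k = j - 1`, the signed factor `(-1)^(k-l) * C(m + (k-l), m)` is the
generalized binomial coefficient `C(-(m+1), k-l)`. The sum is then the Chu–Vandermonde
convolution for `C(n + (-(m+1)), k) = C(k, k) = 1`.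
-/

open Finset

theorem Ring.choose_neg_natCast_succ {R : Type*} [Ring R] [BinomialRing R] (m k : ℕ) :
    Ring.choose (-((m : R) + 1)) k = (-1) ^ k * ((m + k).choose m : R) := by
  rw [Ring.choose_neg, show (m : R) + 1 + k - 1 = ((m + k : ℕ) : R) by push_cast; abel,
    Ring.choose_natCast, ← Nat.choose_symm_add, Units.smul_def, Int.coe_negOnePow_natCast,
    zsmul_eq_mul, Int.cast_pow, Int.cast_neg, Int.cast_one]

theorem sum_antidiagonal_choose_mul_neg_one_pow_mul_choose (N m k : ℕ) :
    ∑ p ∈ antidiagonal k, (N.choose p.1 : ℤ) * ((-1) ^ p.2 * ((m + p.2).choose m : ℤ)) =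
      Ring.choose ((N : ℤ) - (m + 1)) k := by
  rw [sub_eq_add_neg, Ring.add_choose_eq k (Commute.all _ _)]
  simp only [Ring.choose_natCast, Ring.choose_neg_natCast_succ]

theorem alternating_binomial_product_sum_eq_one (n j : ℕ) (hj : 1 ≤ j) (hjn : j ≤ n) :
    ∑ l ∈ Finset.range j,
        (-1 : ℤ) ^ (j - l - 1) * ((n - l - 1).choose (n - j) : ℤ) * (n.choose l : ℤ) = 1 := by
  obtain ⟨k, rfl⟩ := Nat.exists_eq_add_of_le' hj
  obtain ⟨m, rfl⟩ := Nat.exists_eq_add_of_le hjn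
  have vandermonde := sum_antidiagonal_choose_mul_neg_one_pow_mul_choose (k + 1 + m) m k
  rw [Nat.sum_antidiagonal_eq_sum_range_succ
      (fun l i => ((k + 1 + m).choose l : ℤ) * ((-1) ^ i * ((m + i).choose m : ℤ))),
    show ((k + 1 + m : ℕ) : ℤ) - (m + 1) = k by push_cast; ring, Ring.choose_natCast,
    Nat.choose_self, Nat.cast_one] at vandermonde
  refine Eq.trans (sum_congr rfl fun l hl => ?_) vandermonde
  rw [show k + 1 + m - l - 1 = m + (k - l) by grind, show k + 1 - l - 1 = k - l by omega,
    Nat.add_sub_cancel_left]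
  ring
end

section
/- Let n and j be positive integers with 1 ≤ j ≤ n. Then ∑_{l=0}^{j-1} (-1)^(j-l-1) · binomial(n-l-1, n-j) · binomial(n, l) · 1/(n-l) = H_n − H_{n-j}, and this common value equals (1/(n)_j) · ∑_{ν=0}^{j-1} (-1)^(j-ν-1) · (ν+1) · s(j, ν+1) · n^ν, where s(j, k) is the unsigned Stirling number of the first kind. -/
/-- The unsigned Stirling numbers of the first kind: `stirlingFirst j k` is the
coefficient of `x^k` in the ascending factorial `x (x+1) ⋯ (x+j-1)`; equivalently,
the falling factorial satisfies `(x)_j = ∑_{k=0}^j (-1)^(j-k) stirlingFirst j k * x^k`. -/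
noncomputable def stirlingFirst (j k : ℕ) : ℕ := (ascPochhammer ℕ j).coeff k

/-!
Both sums equal `∑_{i<j} 1/(n-i) = H_n - H_{n-j}`. For the binomial sum, Pascal's rule in the
first binomial coefficient reduces the step `j → j+1` to the partial-fraction expansion
`∑_{l ≤ j} (-1)^(j-l) C(j,l) / (y-l) = j! / (y(y-1)⋯(y-j))` at `y = n`. The Stirling sum is, up to
sign, the derivative of the rising factorial `x(x+1)⋯(x+j-1)` at `x = -n`, and the logarithmic
derivative of that product is `∑_{i<j} 1/(x+i)`.
-/

open Finset Polynomial
open scoped Nat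

theorem descPochhammer_eval_ne_zero {K : Type*} [Field K] {m : ℕ} {y : K}
    (hy : ∀ i < m, y ≠ i) : (descPochhammer K m).eval y ≠ 0 := by
  rw [descPochhammer_eval_eq_prod_range]
  exact prod_ne_zero_iff.mpr fun i hi => sub_ne_zero.mpr (hy i (mem_range.mp hi))

theorem sum_choose_mul_neg_one_pow_div_sub {K : Type*} [Field K] (m : ℕ) (y : K)
    (hy : ∀ i ≤ m, y ≠ i) :
    ∑ i ∈ range (m + 1), (m.choose i : K) * ((-1) ^ (m - i) / (y - i)) =
      m ! / (descPochhammer K (m + 1)).eval y := by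
  induction m generalizing y with
  | zero => simp
  | succ m ih =>
    have hy₀ : ∀ i ≤ m, y ≠ i := fun i hi => hy i (by omega)
    have hy₁ : ∀ i ≤ m, y - 1 ≠ i := fun i hi h =>
      hy (i + 1) (by omega) (by push_cast; linear_combination h)
    -- Pascal's rule: the sum at `m + 1` is the sum at `m` evaluated at `y - 1` minus that at `y`.
    rw [sum_choose_succ_mul (fun i k => (-1 : K) ^ k / (y - i)) m]
    have hsign : ∀ i ∈ range (m + 1), (m.choose i : K) * ((-1) ^ (m + 1 - i) / (y - i)) =
        -((m.choose i : K) * ((-1) ^ (m - i) / (y - i))) := fun i hi => by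
      rw [show m + 1 - i = m - i + 1 by have := mem_range.mp hi; omega, pow_succ]; ring
    have hshift : ∀ i ∈ range (m + 1),
        (m.choose i : K) * ((-1) ^ (m - i) / (y - (i + 1 : ℕ))) =
          (m.choose i : K) * ((-1) ^ (m - i) / (y - 1 - i)) := fun i _ => by push_cast; ring
    rw [sum_congr rfl hsign, sum_congr rfl hshift, sum_neg_distrib, ih y hy₀, ih (y - 1) hy₁]
    have hD₀ : (descPochhammer K (m + 1)).eval y ≠ 0 :=
      descPochhammer_eval_ne_zero fun i hi => hy₀ i (by omega)
    have hD₁ : (descPochhammer K (m + 1)).eval (y - 1) ≠ 0 :=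
      descPochhammer_eval_ne_zero fun i hi => hy₁ i (by omega)
    have hsucc_left :
        (descPochhammer K (m + 2)).eval y = y * (descPochhammer K (m + 1)).eval (y - 1) := by
      rw [descPochhammer_succ_left, eval_mul, eval_X, eval_comp, eval_sub, eval_X, eval_one]
    have hsucc_right := descPochhammer_succ_eval (m + 1) y
    rw [hsucc_left] at hsucc_right ⊢
    have hy_ne_zero : y ≠ 0 := by simpa using hy 0 (by omega)
    rw [neg_div', div_add_div _ _ hD₀ hD₁,
      div_eq_div_iff (mul_ne_zero hD₀ hD₁) (mul_ne_zero hy_ne_zero hD₁)]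
    push_cast [Nat.factorial_succ] at hsucc_right ⊢
    linear_combination -(↑m ! * (descPochhammer K (m + 1)).eval (y - 1)) * hsucc_right

def altBinomialSum (n j : ℕ) : ℚ :=
  ∑ l ∈ range j, (-1 : ℚ) ^ (j - l - 1) * ((n - l - 1).choose (n - j) : ℚ) * (n.choose l : ℚ) *
    (1 / ((n - l : ℕ) : ℚ))

theorem sum_neg_one_pow_mul_choose_mul_choose_div {n j : ℕ} (hjn : j < n) :
    ∑ l ∈ range (j + 1), (-1 : ℚ) ^ (j - l) * ((n - l).choose (n - j) : ℚ) * (n.choose l : ℚ) *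
      (1 / ((n - l : ℕ) : ℚ)) = 1 / ((n : ℚ) - j) := by
  have hterm : ∀ l ∈ range (j + 1), (-1 : ℚ) ^ (j - l) * ((n - l).choose (n - j) : ℚ) *
      (n.choose l : ℚ) * (1 / ((n - l : ℕ) : ℚ)) =
      n.choose j * ((j.choose l : ℚ) * ((-1) ^ (j - l) / ((n : ℚ) - l))) := fun l hl => by
    have hlj : l ≤ j := Nat.lt_succ_iff.mp (mem_range.mp hl)
    have hchoose : ((n - l).choose (n - j) : ℚ) * n.choose l = n.choose j * j.choose l := by
      rw [Nat.choose_symm_of_eq_add (by omega : n - l = (n - j) + (j - l)), mul_comm]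
      exact_mod_cast (Nat.choose_mul hlj).symm
    rw [Nat.cast_sub (by omega : l ≤ n)]
    linear_combination (-1 : ℚ) ^ (j - l) / ((n : ℚ) - l) * hchoose
  have hn : ∀ i ≤ j, (n : ℚ) ≠ i := fun i hi => by exact_mod_cast (by omega : n ≠ i)
  rw [sum_congr rfl hterm, ← mul_sum, sum_choose_mul_neg_one_pow_div_sub j (n : ℚ) hn,
    descPochhammer_eval_eq_descFactorial, Nat.descFactorial_succ,
    Nat.descFactorial_eq_factorial_mul_choose, Nat.cast_mul, Nat.cast_sub hjn.le]
  have hchoose : (n.choose j : ℚ) ≠ 0 := by exact_mod_cast (Nat.choose_pos hjn.le).ne'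
  have hnj : (n : ℚ) - j ≠ 0 := sub_ne_zero.mpr (hn j le_rfl)
  field_simp
  push_cast
  ring

theorem altBinomialSum_succ {n j : ℕ} (hjn : j < n) :
    altBinomialSum n (j + 1) = altBinomialSum n j + 1 / ((n : ℚ) - j) := by
  have hpascal : ∀ l ∈ range (j + 1),
      (-1 : ℚ) ^ (j + 1 - l - 1) * ((n - l - 1).choose (n - (j + 1)) : ℚ) * (n.choose l : ℚ) *
        (1 / ((n - l : ℕ) : ℚ)) =
      (-1 : ℚ) ^ (j - l) * ((n - l).choose (n - j) : ℚ) * (n.choose l : ℚ) *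
          (1 / ((n - l : ℕ) : ℚ)) -
        (-1 : ℚ) ^ (j - l) * ((n - l - 1).choose (n - j) : ℚ) * (n.choose l : ℚ) *
          (1 / ((n - l : ℕ) : ℚ)) := fun l hl => by
    have hlj : l ≤ j := Nat.lt_succ_iff.mp (mem_range.mp hl)
    rw [show n - l = (n - l - 1) + 1 by omega, show n - j = (n - (j + 1)) + 1 by omega,
      Nat.choose_succ_succ', show j + 1 - l - 1 = j - l by omega]
    push_cast
    ring
  have hsign : ∀ l ∈ range j,
      (-1 : ℚ) ^ (j - l) * ((n - l - 1).choose (n - j) : ℚ) * (n.choose l : ℚ) *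
        (1 / ((n - l : ℕ) : ℚ)) =
      -((-1 : ℚ) ^ (j - l - 1) * ((n - l - 1).choose (n - j) : ℚ) * (n.choose l : ℚ) *
        (1 / ((n - l : ℕ) : ℚ))) := fun l hl => by
    have hlj := mem_range.mp hl
    rw [show j - l - 1 = j - (l + 1) by omega, show j - l = j - (l + 1) + 1 by omega, pow_succ]
    ring
  rw [altBinomialSum, sum_congr rfl hpascal, sum_sub_distrib,
    sum_neg_one_pow_mul_choose_mul_choose_div hjn, sum_range_succ _ j, sum_congr rfl hsign,
    sum_neg_distrib, Nat.choose_eq_zero_of_lt (by omega : n - j - 1 < n - j), altBinomialSum]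
  simp
  ring

theorem altBinomialSum_eq_sum_inv_sub {n j : ℕ} (hjn : j ≤ n) :
    altBinomialSum n j = ∑ i ∈ range j, 1 / ((n : ℚ) - i) := by
  induction j with
  | zero => simp [altBinomialSum]
  | succ j ih => rw [altBinomialSum_succ hjn, ih (by omega), sum_range_succ]

theorem harmonic'_succ (r k : ℕ) :
    harmonic' r (k + 1) = harmonic' r k + 1 / ((k + 1 : ℕ) : ℚ) ^ r :=
  sum_Icc_succ_top (by omega) _

theorem harmonic'_one_sub_harmonic'_one {n j : ℕ} (hjn : j ≤ n) :
    harmonic' 1 n - harmonic' 1 (n - j) = ∑ i ∈ range j, 1 / ((n : ℚ) - i) := by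
  induction j with
  | zero => simp
  | succ j ih =>
    rw [sum_range_succ, ← ih (by omega), show n - j = n - (j + 1) + 1 by omega, harmonic'_succ,
      show n - (j + 1) + 1 = n - j by omega, Nat.cast_sub (by omega : j ≤ n)]
    ring

theorem ascPochhammer_derivative_eval {K : Type*} [Field K] (j : ℕ) (x : K)
    (hx : ∀ i < j, x + i ≠ 0) :
    (derivative (ascPochhammer K j)).eval x =
      (ascPochhammer K j).eval x * ∑ i ∈ range j, 1 / (x + i) := by
  induction j with
  | zero => simp
  | succ j ih =>
    have hxj : x + j ≠ 0 := hx j (by omega)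
    rw [ascPochhammer_succ_right, sum_range_succ]
    simp only [derivative_mul, derivative_add, derivative_X, derivative_natCast, add_zero,
      mul_one, eval_add, eval_mul, eval_X, eval_natCast]
    rw [ih fun i hi => hx i (by omega)]
    field_simp

theorem eval_derivative_eq_sum_range {R : Type*} [CommSemiring R] {p : R[X]} {j : ℕ}
    (hp : p.natDegree ≤ j) (x : R) :
    (derivative p).eval x = ∑ ν ∈ range j, (ν + 1 : R) * p.coeff (ν + 1) * x ^ ν := by
  rw [eval_eq_sum_range' (n := j + 1) ((natDegree_derivative_le p).trans_lt (by omega)),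
    sum_range_succ, coeff_derivative,
    coeff_eq_zero_of_natDegree_lt (by omega : p.natDegree < j + 1), zero_mul, zero_mul, add_zero]
  refine sum_congr rfl fun ν _ => ?_
  rw [coeff_derivative]
  ring

theorem ascPochhammer_natDegree_le (R : Type*) [Semiring R] (j : ℕ) :
    (ascPochhammer R j).natDegree ≤ j := by
  rw [← ascPochhammer_map (Nat.castRingHom R)]
  exact natDegree_map_le.trans (ascPochhammer_natDegree ℕ j).le

theorem ascPochhammer_coeff_eq_stirlingFirst (R : Type*) [Semiring R] (j k : ℕ) :
    (ascPochhammer R j).coeff k = stirlingFirst j k := by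
  rw [← ascPochhammer_map (Nat.castRingHom R), coeff_map, stirlingFirst, eq_natCast]

theorem ascPochhammer_eval_neg_natCast (R : Type*) [CommRing R] (n j : ℕ) :
    (ascPochhammer R j).eval (-(n : R)) = (-1) ^ j * n.descFactorial j := by
  rw [ascPochhammer_eval_neg_eq_descPochhammer, descPochhammer_eval_eq_descFactorial]

theorem sum_stirlingFirst_eq_eval_derivative_ascPochhammer {R : Type*} [CommRing R] (j : ℕ)
    (x : R) :
    ∑ ν ∈ range j, (-1 : R) ^ (j - ν - 1) * (ν + 1 : R) * (stirlingFirst j (ν + 1) : R) * x ^ ν =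
      (-1) ^ (j + 1) * (derivative (ascPochhammer R j)).eval (-x) := by
  rw [eval_derivative_eq_sum_range (ascPochhammer_natDegree_le R j), mul_sum]
  refine sum_congr rfl fun ν hν => ?_
  have hpow : (-1 : R) ^ (j - ν - 1) = (-1) ^ (j + 1) * (-1) ^ ν := by
    rw [← pow_add, show j + 1 + ν = (j - ν - 1) + 2 * (ν + 1) by have := mem_range.mp hν; omega,
      pow_add, pow_mul, neg_one_sq, one_pow, mul_one]
  rw [ascPochhammer_coeff_eq_stirlingFirst, neg_pow, hpow]
  ring

theorem sum_stirlingFirst_eq {n j : ℕ} (hjn : j ≤ n) :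
    ∑ ν ∈ range j, (-1 : ℚ) ^ (j - ν - 1) * (ν + 1 : ℚ) * (stirlingFirst j (ν + 1) : ℚ) *
        (n : ℚ) ^ ν =
      n.descFactorial j * ∑ i ∈ range j, 1 / ((n : ℚ) - i) := by
  have hx : ∀ i < j, -(n : ℚ) + i ≠ 0 := fun i hi => by
    rw [neg_add_eq_sub, sub_ne_zero]; exact_mod_cast (by omega : i ≠ n)
  have hpow : (-1 : ℚ) ^ (j + 1) * (-1) ^ j = -1 := by
    rw [← pow_add, show j + 1 + j = 2 * j + 1 by ring, pow_succ, pow_mul, neg_one_sq, one_pow,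
      one_mul]
  rw [sum_stirlingFirst_eq_eval_derivative_ascPochhammer, ascPochhammer_derivative_eval j _ hx,
    ascPochhammer_eval_neg_natCast, mul_sum, mul_sum, mul_sum]
  refine sum_congr rfl fun i _ => ?_
  rw [neg_add_eq_sub, ← neg_sub, div_neg]
  linear_combination (-((n.descFactorial j : ℚ) * (1 / ((n : ℚ) - i)))) * hpow

theorem binomial_sum_harmonic_diff_and_stirling_general (n j : ℕ) (hjn : j ≤ n) :
    (∑ l ∈ Finset.range j,
        (-1 : ℚ) ^ (j - l - 1) * ((n - l - 1).choose (n - j) : ℚ) * (n.choose l : ℚ) *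
          (1 / ((n - l : ℕ) : ℚ)) =
      harmonic' 1 n - harmonic' 1 (n - j)) ∧
    (∑ l ∈ Finset.range j,
        (-1 : ℚ) ^ (j - l - 1) * ((n - l - 1).choose (n - j) : ℚ) * (n.choose l : ℚ) *
          (1 / ((n - l : ℕ) : ℚ)) =
      (1 / (n.descFactorial j : ℚ)) *
        ∑ ν ∈ Finset.range j,
          (-1 : ℚ) ^ (j - ν - 1) * (ν + 1 : ℚ) * (stirlingFirst j (ν + 1) : ℚ) * (n : ℚ) ^ ν) := by
  change altBinomialSum n j = _ ∧ altBinomialSum n j = _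
  have hD : (n.descFactorial j : ℚ) ≠ 0 := by
    exact_mod_cast (Nat.descFactorial_pos.mpr hjn).ne'
  rw [altBinomialSum_eq_sum_inv_sub hjn, harmonic'_one_sub_harmonic'_one hjn,
    sum_stirlingFirst_eq hjn, one_div, inv_mul_cancel_left₀ hD]
  exact ⟨rfl, rfl⟩

theorem binomial_sum_harmonic_diff_and_stirling (n j : ℕ) (hj : 1 ≤ j) (hjn : j ≤ n) :
    (∑ l ∈ Finset.range j,
        (-1 : ℚ) ^ (j - l - 1) * ((n - l - 1).choose (n - j) : ℚ) * (n.choose l : ℚ) *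
          (1 / ((n - l : ℕ) : ℚ)) =
      harmonic' 1 n - harmonic' 1 (n - j)) ∧
    (∑ l ∈ Finset.range j,
        (-1 : ℚ) ^ (j - l - 1) * ((n - l - 1).choose (n - j) : ℚ) * (n.choose l : ℚ) *
          (1 / ((n - l : ℕ) : ℚ)) =
      (1 / (n.descFactorial j : ℚ)) *
        ∑ ν ∈ Finset.range j,
          (-1 : ℚ) ^ (j - ν - 1) * (ν + 1 : ℚ) * (stirlingFirst j (ν + 1) : ℚ) * (n : ℚ) ^ ν) :=
  binomial_sum_harmonic_diff_and_stirling_general n j hjn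
end
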